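/- arXiv:2207.11015 — 2 statements merged into one kernel-verified Lean document; each statement's English description precedes it below -/
import Mathlib

section
/- Let q ≥ 2 and n ≥ 1 be integers and f, g : ℤ_q^n → ℤ_{2q}. Then for every z ∈ ℤ_q^n, C_{f,g}(z) = ω^{Σ_i ẑ_i} Σ_{u ∈ ℤ_q^n} N_f(u) · conj(N_g(u)) · ξ^{⟨û,ẑ⟩}. -/
open Finset

/-- `ω = e^{πi/q}`, a primitive `2q`-th root of unity. -/
noncomputable def omg (q : ℕ) : ℂ := Complex.exp ((Real.pi : ℂ) * Complex.I / q)

/-- `ξ = e^{2πi/q}`, a primitive `q`-th root of unity. -/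
noncomputable def xiq (q : ℕ) : ℂ := Complex.exp (2 * (Real.pi : ℂ) * Complex.I / q)

/-- The `2q`-nega-Hadamard transform of `f : ℤ_q^n → ℤ_{2q}` at `u ∈ ℤ_q^n`:
`N_f(u) = q^{-n/2} Σ_x ω^{f(x)} ξ^{⟨x̂,û⟩} ω^{Σ_i x̂_i}`. -/
noncomputable def NHT (q n : ℕ) [NeZero q] (f : (Fin n → ZMod q) → ZMod (2 * q))
    (u : Fin n → ZMod q) : ℂ :=
  (Real.sqrt ((q : ℝ) ^ n) : ℂ)⁻¹ *
    ∑ x : Fin n → ZMod q,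
      omg q ^ (f x).val * xiq q ^ (∑ i, (x i).val * (u i).val) * omg q ^ (∑ i, (x i).val)

/-- The `2q`-nega-crosscorrelation of `f, g : ℤ_q^m → ℤ_{2q}` at `u`:
`C_{f,g}(u) = Σ_x ω^{f(x) − g(x+u)} (−1)^{n_q(x̂,û)}`. -/
noncomputable def negaCC (q m : ℕ) [NeZero q]
    (f g : (Fin m → ZMod q) → ZMod (2 * q)) (u : Fin m → ZMod q) : ℂ :=
  ∑ x : Fin m → ZMod q,
    omg q ^ (f x - g (x + u)).val *
      (-1 : ℂ) ^ (Finset.univ.filter (fun i => q ≤ (x i).val + (u i).val)).card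

/-!
With the standard additive characters `χ` of `ℤ_{2q}` and `ψ` of `ℤ_q` one has `ω^k = χ(k)` and
`ξ^k = ψ(k)`, so `N_f(u) = q^{-n/2} Σ_x F_f(x) ψ(x ⬝ u)` with `F_f(x) = χ(f(x) + Σ_i x̂_i)`.
Orthogonality of the characters `u ↦ ψ(w ⬝ u)` of `ℤ_q^n` collapses the right-hand side to
`ω^{Σ ẑ_i} Σ_x F_f(x) conj F_g(x + z)`. Finally `x̂_i + ẑ_i` exceeds the representative of
`x_i + z_i` by `q` exactly when `x̂_i + ẑ_i ≥ q`, and `ω^q = -1` turns these carries into the sign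
`(-1)^{n_q(x̂, ẑ)}`.
-/

open Matrix ComplexConjugate

namespace AddChar

variable {R ι : Type*}

lemma map_sum_eq_prod {M : Type*} [AddCommMonoid R] [CommMonoid M] (ψ : AddChar R M)
    (s : Finset ι) (a : ι → R) : ψ (∑ i ∈ s, a i) = ∏ i ∈ s, ψ (a i) := by
  classical
  induction s using Finset.induction_on with
  | empty => simp
  | insert j s hj ih => rw [sum_insert hj, map_add_eq_mul, ih, prod_insert hj]

variable [CommRing R] [Fintype R] [DecidableEq R] [Fintype ι] [DecidableEq ι]

theorem sum_apply_dotProduct {R' : Type*} [CommRing R'] [IsDomain R'] {ψ : AddChar R R'}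
    (hψ : ψ.IsPrimitive) (w : ι → R) :
    ∑ u : ι → R, ψ (w ⬝ᵥ u) = if w = 0 then (Fintype.card R : R') ^ Fintype.card ι else 0 := by
  simp only [dotProduct, map_sum_eq_prod]
  rw [← Fintype.prod_sum (fun i v => ψ (w i * v))]
  simp only [mul_comm (w _), sum_mulShift _ hψ, Nat.cast_ite, Nat.cast_zero,
    Fintype.prod_ite_zero, prod_const, card_univ, funext_iff, Pi.zero_apply]

theorem sum_mul_conj_mul_apply_dotProduct {ψ : AddChar R ℂ} (hψ : ψ.IsPrimitive)
    (F G : (ι → R) → ℂ) (z : ι → R) :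
    ∑ u, (∑ x, F x * ψ (x ⬝ᵥ u)) * conj (∑ y, G y * ψ (y ⬝ᵥ u)) * ψ (u ⬝ᵥ z)
      = (Fintype.card R : ℂ) ^ Fintype.card ι * ∑ x, F x * conj (G (x + z)) := by
  calc _ = ∑ u, ∑ x, ∑ y, F x * conj (G y) * ψ ((x - y + z) ⬝ᵥ u) := by
          refine sum_congr rfl fun u _ => ?_
          rw [map_sum, sum_mul_sum, sum_mul]
          refine sum_congr rfl fun x _ => ?_
          rw [sum_mul]
          refine sum_congr rfl fun y _ => ?_
          rw [map_mul, ← map_neg_eq_conj, add_dotProduct, sub_dotProduct, dotProduct_comm z,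
            sub_eq_add_neg, map_add_eq_mul, map_add_eq_mul]
          ring
    _ = ∑ x, ∑ y, F x * conj (G y) * ∑ u, ψ ((x - y + z) ⬝ᵥ u) := by
          rw [sum_comm]
          refine sum_congr rfl fun x _ => ?_
          rw [sum_comm]
          simp_rw [mul_sum]
    _ = _ := by
          simp_rw [sum_apply_dotProduct hψ, sub_add_eq_add_sub, sub_eq_zero, mul_ite, mul_zero,
            sum_ite_eq, if_pos (mem_univ _), mul_sum]
          exact sum_congr rfl fun x _ => by ring

end AddChar

section NegaHadamard

variable {q : ℕ} [NeZero q]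

lemma omg_pow_eq_stdAddChar (k : ℕ) : omg q ^ k = ZMod.stdAddChar (k : ZMod (2 * q)) := by
  rw [← Int.cast_natCast, ZMod.stdAddChar_coe, omg, ← Complex.exp_nat_mul]
  have : (q : ℂ) ≠ 0 := Nat.cast_ne_zero.mpr (NeZero.ne q)
  congr 1
  push_cast
  field_simp

lemma omg_pow_self : omg q ^ q = -1 := by
  have : (q : ℂ) ≠ 0 := Nat.cast_ne_zero.mpr (NeZero.ne q)
  rw [omg, ← Complex.exp_nat_mul, mul_div_cancel₀ _ this, Complex.exp_pi_mul_I]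

lemma xiq_pow_eq_stdAddChar (k : ℕ) : xiq q ^ k = ZMod.stdAddChar (k : ZMod q) := by
  rw [← Int.cast_natCast, ZMod.stdAddChar_coe, xiq, ← Complex.exp_nat_mul]
  congr 1
  push_cast
  ring

variable {ι : Type*} [Fintype ι]

lemma xiq_pow_sum_val_mul_val (x u : ι → ZMod q) :
    xiq q ^ (∑ i, (x i).val * (u i).val) = ZMod.stdAddChar (x ⬝ᵥ u) := by
  rw [xiq_pow_eq_stdAddChar]
  push_cast [ZMod.natCast_val, ZMod.cast_id]
  rfl

lemma sum_val_add_sum_val (x z : ι → ZMod q) :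
    ∑ i, (x i).val + ∑ i, (z i).val
      = ∑ i, (x i + z i).val + q * (univ.filter fun i => q ≤ (x i).val + (z i).val).card := by
  rw [← sum_add_distrib, card_filter, mul_sum, ← sum_add_distrib]
  refine sum_congr rfl fun i _ => ?_
  split_ifs with h
  · rw [ZMod.val_add_val_of_le h, mul_one]
  · rw [ZMod.val_add_of_lt (not_le.mp h), mul_zero, add_zero]

noncomputable def negaTwist (f : (ι → ZMod q) → ZMod (2 * q)) (x : ι → ZMod q) : ℂ :=
  ZMod.stdAddChar (f x + ((∑ i, (x i).val : ℕ) : ZMod (2 * q)))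

lemma omg_pow_sum_val_mul_negaTwist_mul_conj (f g : (ι → ZMod q) → ZMod (2 * q))
    (x z : ι → ZMod q) :
    omg q ^ (∑ i, (z i).val) * negaTwist f x * conj (negaTwist g (x + z))
      = omg q ^ (f x - g (x + z)).val
          * (-1) ^ (univ.filter fun i => q ≤ (x i).val + (z i).val).card := by
  have hcarry := congrArg (Nat.cast : ℕ → ZMod (2 * q)) (sum_val_add_sum_val x z)
  rw [negaTwist, negaTwist, ← AddChar.map_neg_eq_conj, ← omg_pow_self (q := q), ← pow_mul,
    omg_pow_eq_stdAddChar, omg_pow_eq_stdAddChar, omg_pow_eq_stdAddChar, ← AddChar.map_add_eq_mul,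
    ← AddChar.map_add_eq_mul, ← AddChar.map_add_eq_mul, ZMod.natCast_zmod_val]
  congr 1
  push_cast at hcarry ⊢
  simp only [Pi.add_apply]
  linear_combination hcarry

lemma NHT_eq_sum_negaTwist_mul_stdAddChar {n : ℕ} (f : (Fin n → ZMod q) → ZMod (2 * q))
    (u : Fin n → ZMod q) :
    NHT q n f u
      = (√((q : ℝ) ^ n) : ℂ)⁻¹ * ∑ x, negaTwist f x * ZMod.stdAddChar (N := q) (x ⬝ᵥ u) := by
  rw [NHT]
  congr 1
  refine sum_congr rfl fun x _ => ?_
  rw [xiq_pow_sum_val_mul_val, omg_pow_eq_stdAddChar, omg_pow_eq_stdAddChar,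
    ZMod.natCast_zmod_val, negaTwist, AddChar.map_add_eq_mul]
  ring

end NegaHadamard

lemma Complex.ofReal_sqrt_inv_mul_conj_mul_self {a : ℝ} (ha : 0 < a) :
    (√a : ℂ)⁻¹ * conj (√a : ℂ)⁻¹ * a = 1 := by
  rw [map_inv₀, Complex.conj_ofReal, ← mul_inv, ← Complex.ofReal_mul, Real.mul_self_sqrt ha.le,
    inv_mul_cancel₀ (Complex.ofReal_ne_zero.mpr ha.ne')]

theorem negaCC_eq_sum_general (q n : ℕ) [NeZero q]
    (f g : (Fin n → ZMod q) → ZMod (2 * q)) (z : Fin n → ZMod q) :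
    negaCC q n f g z
      = omg q ^ (∑ i, (z i).val) *
          ∑ u : Fin n → ZMod q,
            NHT q n f u * (starRingEnd ℂ) (NHT q n g u) *
              xiq q ^ (∑ i, (u i).val * (z i).val) := by
  set ψ : AddChar (ZMod q) ℂ := ZMod.stdAddChar with hψ
  obtain ⟨s, hs_def⟩ : ∃ s : ℂ, (√((q : ℝ) ^ n) : ℂ)⁻¹ = s := ⟨_, rfl⟩
  have hs : s * conj s * (q : ℂ) ^ n = 1 := by
    have hq : 0 < (q : ℝ) ^ n := pow_pos (Nat.cast_pos.mpr (NeZero.pos q)) n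
    simpa [hs_def] using Complex.ofReal_sqrt_inv_mul_conj_mul_self hq
  calc negaCC q n f g z
      = omg q ^ (∑ i, (z i).val) * ∑ x, negaTwist f x * conj (negaTwist g (x + z)) := by
        rw [negaCC, mul_sum]
        refine sum_congr rfl fun x _ => ?_
        rw [← mul_assoc, omg_pow_sum_val_mul_negaTwist_mul_conj]
    _ = omg q ^ (∑ i, (z i).val) * (s * conj s * ∑ u,
          (∑ x, negaTwist f x * ψ (x ⬝ᵥ u)) * conj (∑ y, negaTwist g y * ψ (y ⬝ᵥ u))
            * ψ (u ⬝ᵥ z)) := by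
        rw [AddChar.sum_mul_conj_mul_apply_dotProduct (ZMod.isPrimitive_stdAddChar q), ZMod.card,
          Fintype.card_fin, ← mul_assoc (s * conj s), hs, one_mul]
    _ = _ := by
        simp only [NHT_eq_sum_negaTwist_mul_stdAddChar, xiq_pow_sum_val_mul_val, ← hψ, hs_def]
        rw [mul_sum]
        exact congrArg _ (sum_congr rfl fun u _ => by rw [map_mul]; ring)

/-- For all `z ∈ ℤ_q^n`,
`C_{f,g}(z) = ω^{Σ_i ẑ_i} Σ_u N_f(u) · conj(N_g(u)) · ξ^{⟨û,ẑ⟩}`. -/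
theorem negaCC_eq_sum (q n : ℕ) [NeZero q] (hq : 2 ≤ q) (hn : 1 ≤ n)
    (f g : (Fin n → ZMod q) → ZMod (2 * q)) (z : Fin n → ZMod q) :
    negaCC q n f g z
      = omg q ^ (∑ i, (z i).val) *
          ∑ u : Fin n → ZMod q,
            NHT q n f u * (starRingEnd ℂ) (NHT q n g u) *
              xiq q ^ (∑ i, (u i).val * (z i).val) :=
  negaCC_eq_sum_general q n f g z
end

section
/- Let q ≥ 2 be any integer. Then the function f : ℤ_q² → ℤ_{2q} defined by f(x_1, x_2) = 2x̂_1x̂_2 + x̂_1 (the integer value reduced modulo 2q) is 2q-negabent. -/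
open Finset

lemma xiq_isPrimitiveRoot (q : ℕ) [NeZero q] : IsPrimitiveRoot (xiq q) q :=
  Complex.isPrimitiveRoot_exp q (NeZero.ne q)

lemma omg_isPrimitiveRoot (q : ℕ) [NeZero q] : IsPrimitiveRoot (omg q) (2 * q) := by
  convert Complex.isPrimitiveRoot_exp (2 * q) (by simp [NeZero.ne q]) using 2
  unfold omg
  push_cast
  field_simp

lemma xiq_eq_omg_sq (q : ℕ) : xiq q = omg q ^ 2 := by
  unfold xiq omg
  rw [← Complex.exp_nat_mul]
  congr 1
  push_cast
  ring

lemma omg_pow_natCast_val (q : ℕ) [NeZero q] (n : ℕ) :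
    omg q ^ (n : ZMod (2 * q)).val = omg q ^ n := by
  rw [ZMod.val_natCast, ← pow_eq_pow_mod n (omg_isPrimitiveRoot q).pow_eq_one]

lemma ZMod.sum_val_eq_sum_range {M : Type*} [AddCommMonoid M] (q : ℕ) [NeZero q] (g : ℕ → M) :
    ∑ a : ZMod q, g a.val = ∑ i ∈ range q, g i := by
  obtain ⟨n, rfl⟩ := Nat.exists_eq_succ_of_ne_zero (NeZero.ne q)
  exact Fin.sum_univ_eq_sum_range g _

lemma IsPrimitiveRoot.sum_zmod_pow_val_mul {R : Type*} [CommRing R] [IsDomain R] {ζ : R}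
    {q : ℕ} [NeZero q] (hζ : IsPrimitiveRoot ζ q) (c : ℕ) :
    ∑ a : ZMod q, ζ ^ (a.val * c) = if (c : ZMod q) = 0 then (q : R) else 0 := by
  simp_rw [mul_comm _ c, pow_mul]
  rw [ZMod.sum_val_eq_sum_range q fun i => (ζ ^ c) ^ i]
  have hc : (c : ZMod q) = 0 ↔ ζ ^ c = 1 := by
    rw [ZMod.natCast_eq_zero_iff, hζ.pow_eq_one_iff_dvd]
  split_ifs with h
  · simp [hc.mp h]
  · have hsum := geom_sum_mul (ζ ^ c) q
    rw [← pow_mul, mul_comm c, pow_mul, hζ.pow_eq_one, one_pow, sub_self] at hsum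
    exact (mul_eq_zero.mp hsum).resolve_right (sub_ne_zero.mpr (mt hc.mpr h))

lemma bivariate_summand_eq (q : ℕ) [NeZero q] (a b u₀ u₁ : ℕ) :
    omg q ^ ((2 * a * b + a : ℕ) : ZMod (2 * q)).val * xiq q ^ (a * u₀ + b * u₁) *
        omg q ^ (a + b) =
      xiq q ^ (a * (b + u₀ + 1)) * (xiq q ^ (b * u₁) * omg q ^ b) := by
  rw [omg_pow_natCast_val, xiq_eq_omg_sq]
  ring

lemma sum_pi_fin_two {α M : Type*} [Fintype α] [AddCommMonoid M] (g : (Fin 2 → α) → M) :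
    ∑ x, g x = ∑ b, ∑ a, g ![a, b] := by
  rw [← (piFinTwoEquiv fun _ => α).symm.sum_comp, Fintype.sum_prod_type, Finset.sum_comm]
  rfl

lemma NHT_bivariate_eq (q : ℕ) [NeZero q] (u : Fin 2 → ZMod q) :
    NHT q 2 (fun x => ((2 * (x 0).val * (x 1).val + (x 0).val : ℕ) : ZMod (2 * q))) u =
      xiq q ^ ((-u 0 - 1).val * (u 1).val) * omg q ^ (-u 0 - 1).val := by
  have hinner (b : ZMod q) :
      ∑ a : ZMod q, xiq q ^ (a.val * (b.val + (u 0).val + 1)) =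
        if b = -u 0 - 1 then (q : ℂ) else 0 := by
    rw [(xiq_isPrimitiveRoot q).sum_zmod_pow_val_mul]
    push_cast [ZMod.natCast_val, ZMod.cast_id]
    simp only [eq_sub_iff_add_eq, eq_neg_iff_add_eq_zero, add_right_comm]
  have hq : Real.sqrt ((q : ℝ) ^ 2) = q := Real.sqrt_sq (Nat.cast_nonneg q)
  unfold NHT
  simp only [sum_pi_fin_two, Fin.sum_univ_two, Matrix.cons_val_zero, Matrix.cons_val_one,
    bivariate_summand_eq, ← Finset.sum_mul, hinner, ite_mul, zero_mul, Finset.sum_ite_eq',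
    Finset.mem_univ, if_true, hq, Complex.ofReal_natCast]
  field_simp [NeZero.ne q]

theorem bivariate_negabent_general (q : ℕ) [NeZero q] :
    ∀ u : Fin 2 → ZMod q,
      ‖NHT q 2
        (fun x => ((2 * (x 0).val * (x 1).val + (x 0).val : ℕ) : ZMod (2 * q))) u‖ = 1 := by
  intro u
  rw [NHT_bivariate_eq, norm_mul, norm_pow, norm_pow,
    (xiq_isPrimitiveRoot q).norm'_eq_one (NeZero.ne q),
    (omg_isPrimitiveRoot q).norm'_eq_one (by simp [NeZero.ne q]), one_pow, one_pow, one_mul]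

/-- For any `q ≥ 2`, the function `f(x₁,x₂) = 2x̂₁x̂₂ + x̂₁ (mod 2q)`
on `ℤ_q²` is `2q`-negabent. -/
theorem bivariate_negabent (q : ℕ) [NeZero q] (hq : 2 ≤ q) :
    ∀ u : Fin 2 → ZMod q,
      ‖NHT q 2
        (fun x => ((2 * (x 0).val * (x 1).val + (x 0).val : ℕ) : ZMod (2 * q))) u‖ = 1 :=
  bivariate_negabent_general q
end
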